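/- arXiv:2509.02477 — 2 statements merged into one kernel-verified Lean document; each statement's English description precedes it below -/
import Mathlib

section
/- Let W and G be self-adjoint linear operators on a finite-dimensional real inner product space H, both nonexpansive, with spectra contained in (-1,1], and suppose fix(W) ∩ fix(G) = {0}. Then the composition W ∘ G is a contraction, i.e., ‖(W∘G)(x)‖ < ‖x‖ for all nonzero x ∈ H. -/
open scoped RealInnerProductSpace

lemma key_rigid {H : Type*} [NormedAddCommGroup H] [InnerProductSpace ℝ H]
    (T : H →ₗ[ℝ] H) (hsa : ∀ x y : H, ⟪T x, y⟫ = ⟪x, T y⟫)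
    (hne : ∀ x : H, ‖T x‖ ≤ ‖x‖)
    (hneg : ¬ Module.End.HasEigenvalue T (-1 : ℝ))
    (x : H) (hx : ‖T x‖ = ‖x‖) : T x = x := by
  have h1 : ⟪T (T x), x⟫ = ‖x‖ ^ 2 := by
    rw [hsa, real_inner_self_eq_norm_sq, hx]
  have hTT : ‖T (T x)‖ ≤ ‖x‖ := (hne (T x)).trans_eq hx
  have h2 : T (T x) = x := by
    have := norm_sub_sq_real (T (T x)) x
    have hsq : ‖T (T x)‖ ^ 2 ≤ ‖x‖ ^ 2 := by
      apply pow_le_pow_left₀ (norm_nonneg _) hTT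
    have : ‖T (T x) - x‖ ^ 2 ≤ 0 := by
      rw [this, h1]; nlinarith
    have h0 : ‖T (T x) - x‖ = 0 := le_antisymm (by nlinarith [norm_nonneg (T (T x) - x), sq_nonneg ‖T (T x) - x‖]) (norm_nonneg _)
    rwa [norm_eq_zero, sub_eq_zero] at h0
  -- v := x - T x is eigenvector for -1 if nonzero
  set v := x - T x with hv
  have hTv : T v = (-1 : ℝ) • v := by
    rw [hv, map_sub, h2, neg_smul, one_smul, neg_sub]
  by_cases hv0 : v = 0
  · have : x = T x := by rwa [sub_eq_zero] at hv0
    exact this.symm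
  · exact absurd (Module.End.hasEigenvalue_of_hasEigenvector
      ⟨Module.End.mem_eigenspace_iff.mpr hTv, hv0⟩) hneg

theorem stmt_2 {H : Type*} [NormedAddCommGroup H] [InnerProductSpace ℝ H]
    [FiniteDimensional ℝ H] (W G : H →ₗ[ℝ] H)
    (hWsa : ∀ x y : H, ⟪W x, y⟫ = ⟪x, W y⟫)
    (hGsa : ∀ x y : H, ⟪G x, y⟫ = ⟪x, G y⟫)
    (hWne : ∀ x y : H, ‖W x - W y‖ ≤ ‖x - y‖)
    (hGne : ∀ x y : H, ‖G x - G y‖ ≤ ‖x - y‖)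
    (hWspec : ∀ μ : ℝ, Module.End.HasEigenvalue W μ → μ ∈ Set.Ioc (-1 : ℝ) 1)
    (hGspec : ∀ μ : ℝ, Module.End.HasEigenvalue G μ → μ ∈ Set.Ioc (-1 : ℝ) 1)
    (hfix : ∀ x : H, W x = x → G x = x → x = 0) :
    ∀ x : H, x ≠ 0 → ‖W (G x)‖ < ‖x‖ := by
  have hWn : ∀ x : H, ‖W x‖ ≤ ‖x‖ := fun x => by
    simpa using hWne x 0
  have hGn : ∀ x : H, ‖G x‖ ≤ ‖x‖ := fun x => by
    simpa using hGne x 0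
  have hWneg : ¬ Module.End.HasEigenvalue W (-1 : ℝ) := fun h => by
    have := hWspec _ h; simp at this
  have hGneg : ¬ Module.End.HasEigenvalue G (-1 : ℝ) := fun h => by
    have := hGspec _ h; simp at this
  intro x hx
  by_contra hcon
  push_neg at hcon
  have hle : ‖W (G x)‖ ≤ ‖x‖ := (hWn (G x)).trans (hGn x)
  have heq : ‖W (G x)‖ = ‖x‖ := le_antisymm hle hcon
  have hGeq : ‖G x‖ = ‖x‖ := le_antisymm (hGn x) (by calc ‖x‖ = ‖W (G x)‖ := heq.symm
                                                        _ ≤ ‖G x‖ := hWn _)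
  have hGfix : G x = x := key_rigid G hGsa hGn hGneg x hGeq
  have hWeq : ‖W x‖ = ‖x‖ := by rw [hGfix] at heq; exact heq
  have hWfix : W x = x := key_rigid W hWsa hWn hWneg x hWeq
  exact hx (hfix x hWfix hGfix)
end

section
/- Let A, P₁, P₂ be real matrices with P₁ = AᵀA (A of size p×n) and P₂ symmetric positive semidefinite of size m×m. Suppose X ∈ ℝ^{n×m} has every column a scalar multiple of the all-ones vector e ∈ ℝⁿ, i.e., X = [c₁e, ..., c_m e], and P₁X + XP₂ = 0. If Ae ≠ 0, then X = 0. -/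
open Matrix

theorem stmt_8 (p n m : ℕ) (A : Matrix (Fin p) (Fin n) ℝ)
    (P₂ : Matrix (Fin m) (Fin m) ℝ) (h₂ : P₂.PosSemidef)
    (X : Matrix (Fin n) (Fin m) ℝ) (c : Fin m → ℝ)
    (hX : ∀ i j, X i j = c j)
    (heq : Aᵀ * A * X + X * P₂ = 0)
    (hAe : A *ᵥ (fun _ => (1 : ℝ)) ≠ 0) :
    X = 0 := by
  set e : Fin n → ℝ := fun _ => (1 : ℝ) with he
  set w : Fin p → ℝ := A *ᵥ e with hw
  set s : ℝ := ∑ j, (c j)^2 with hs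
  have hXc : X *ᵥ c = s • e := by
    funext i
    simp [mulVec, dotProduct, hX, hs, sq, he]
  have key : e ⬝ᵥ ((Aᵀ * A * X + X * P₂) *ᵥ c) = 0 := by
    rw [heq]; simp
  have h1 : e ⬝ᵥ ((Aᵀ * A * X) *ᵥ c) = s * (w ⬝ᵥ w) := by
    rw [← mulVec_mulVec, hXc, mulVec_smul, dotProduct_smul, ← mulVec_mulVec,
      dotProduct_mulVec, vecMul_transpose]
    rw [smul_eq_mul]
  have h2 : e ⬝ᵥ ((X * P₂) *ᵥ c) = (n : ℝ) * (c ⬝ᵥ (P₂ *ᵥ c)) := by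
    rw [← mulVec_mulVec]
    have : X *ᵥ (P₂ *ᵥ c) = fun _ => c ⬝ᵥ (P₂ *ᵥ c) := by
      funext i
      simp [mulVec, dotProduct, hX, mul_comm]
    rw [this]
    simp [dotProduct, he, mul_comm]
  have hsum : s * (w ⬝ᵥ w) + (n : ℝ) * (c ⬝ᵥ (P₂ *ᵥ c)) = 0 := by
    rw [← h1, ← h2, ← dotProduct_add, ← add_mulVec, key]
  have hwpos : 0 < w ⬝ᵥ w := by
    have hw0 : w ≠ 0 := hAe
    obtain ⟨i, hi⟩ := Function.ne_iff.mp hw0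
    have : 0 < ∑ i, w i * w i := by
      apply Finset.sum_pos' (fun i _ => mul_self_nonneg _)
      exact ⟨i, Finset.mem_univ i, mul_self_pos.mpr hi⟩
    simpa [dotProduct] using this
  have hP2 : 0 ≤ c ⬝ᵥ (P₂ *ᵥ c) := by simpa using h₂.dotProduct_mulVec_nonneg c
  have hs0 : 0 ≤ s := Finset.sum_nonneg fun j _ => sq_nonneg _
  have hsz : s = 0 := by nlinarith [Nat.cast_nonneg (α := ℝ) n]
  have hc : ∀ j, c j = 0 := by
    intro j
    have := (Finset.sum_eq_zero_iff_of_nonneg (fun j _ => sq_nonneg (c j))).mp hsz j (Finset.mem_univ j)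
    exact pow_eq_zero_iff (by norm_num) |>.mp this
  ext i j
  simp [hX, hc]
end
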